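/- The three-dimensional Lotka–Volterra system is bi-Hamiltonian: with J₀(x) the skew-symmetric matrix with entries (J₀)₁₂ = −x₁x₂, (J₀)₁₃ = x₁x₃, (J₀)₂₃ = −x₂x₃, J₁(x) the skew-symmetric matrix with entries (J₁)₁₂ = x₁x₂x₃, (J₁)₁₃ = −x₁x₂x₃, (J₁)₂₃ = x₁x₂x₃, H₁(x) = x₁ + x₂ + x₃ and H₂(x) = log x₁ + log x₂ + log x₃, one has J₀(x)∇H₁(x) = J₁(x)∇H₂(x) for all x with x₁, x₂, x₃ > 0. -/
import Mathlib


open Matrix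

theorem lotka_volterra_biHamiltonian (x : Fin 3 → ℝ)
    (h0 : 0 < x 0) (h1 : 0 < x 1) (h2 : 0 < x 2) :
    Matrix.mulVec
      (![![0, -(x 0 * x 1), x 0 * x 2],
         ![x 0 * x 1, 0, -(x 1 * x 2)],
         ![-(x 0 * x 2), x 1 * x 2, 0]] : Matrix (Fin 3) (Fin 3) ℝ)
      ![1, 1, 1] =
    Matrix.mulVec
      (![![0, x 0 * x 1 * x 2, -(x 0 * x 1 * x 2)],
         ![-(x 0 * x 1 * x 2), 0, x 0 * x 1 * x 2],
         ![x 0 * x 1 * x 2, -(x 0 * x 1 * x 2), 0]] : Matrix (Fin 3) (Fin 3) ℝ)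
      ![1 / x 0, 1 / x 1, 1 / x 2] := by
  funext i
  fin_cases i <;>
    simp [Matrix.mulVec, dotProduct, Fin.sum_univ_three] <;>
    field_simp <;> ring
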